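/- arXiv:2305.15828 — 2 statements merged into one kernel-verified Lean document; each statement's English description precedes it below -/
import Mathlib

section
/- Let f : ℝ^d → ℝ be differentiable with L₂-Lipschitz gradient. Let δ : ℝ^d → ℝ satisfy |δ(x)| ≤ Δ for all x, set f̃ = f + δ, and define the kernel-based gradient approximation g̃(x, e, r) := d (f̃(x + γ r e) − f̃(x − γ r e)) K(r) e/(2γ). Then for every x ∈ ℝ^d, E[‖g̃(x, e, r)‖₂²] ≤ κ (6 d ‖∇f(x)‖₂² + (3/4) d² L₂² γ²) + 2 κ d² Δ²/γ². -/
open MeasureTheory ProbabilityTheory Set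
open scoped ENNReal RealInnerProductSpace

/-!
Write `f̃(x + γre) - f̃(x - γre)` as `2γr⟪∇f(x), e⟫`, plus a Taylor remainder of size at most
`L₂γ²r²` (the gradient is `L₂`-Lipschitz), plus a noise difference of size at most `2Δ`. The
inequality `(a + b + c)² ≤ 6a² + 3b² + 2c²` and `|r| ≤ 1` then bound `‖g̃‖²` pointwise by
`K(r)² (6d²⟪∇f(x), e⟫² + const)`. Independence of `e` and `r` factors the expectation, and
rotation invariance of `e` gives `d E⟪v, e⟫² = ‖v‖²`: all vectors of the same norm have the same
second moment, and summing over an orthonormal basis gives `E‖e‖² = 1`.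
-/

theorem norm_image_add_sub_sub_fderiv_le {E F : Type*} [NormedAddCommGroup E] [NormedSpace ℝ E]
    [NormedAddCommGroup F] [NormedSpace ℝ F] {f : E → F} {f' : E → E →L[ℝ] F} {L : ℝ} {x : E}
    (hf : ∀ y, HasFDerivAt f (f' y) y) (hlip : ∀ y, ‖f' y - f' x‖ ≤ L * ‖y - x‖) (h : E) :
    ‖f (x + h) - f x - f' x h‖ ≤ L / 2 * ‖h‖ ^ 2 := by
  set φ : ℝ → F := fun t => f (x + t • h) - f x - t • f' x h
  have hφ : ∀ t, HasDerivAt φ ((f' (x + t • h) - f' x) h) t := by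
    intro t
    have hline : HasDerivAt (fun t : ℝ => x + t • h) h t := by
      simpa using ((hasDerivAt_id t).smul_const h).const_add x
    convert (((hf _).comp_hasDerivAt t hline).sub_const (f x)).sub
      ((hasDerivAt_id t).smul_const (f' x h)) using 1
    · rfl
    · simp
  have hB : ∀ t, HasDerivAt (fun t : ℝ => L / 2 * ‖h‖ ^ 2 * t ^ 2) (L * ‖h‖ ^ 2 * t) t :=
    fun t => ((hasDerivAt_pow 2 t).const_mul (L / 2 * ‖h‖ ^ 2)).congr_deriv (by norm_num; ring)
  have hbound : ∀ t ∈ Ico (0 : ℝ) 1, ‖(f' (x + t • h) - f' x) h‖ ≤ L * ‖h‖ ^ 2 * t := by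
    intro t ht
    calc ‖(f' (x + t • h) - f' x) h‖ ≤ ‖f' (x + t • h) - f' x‖ * ‖h‖ :=
          ContinuousLinearMap.le_opNorm _ _
      _ ≤ L * ‖t • h‖ * ‖h‖ := by
          gcongr
          simpa using hlip (x + t • h)
      _ = L * ‖h‖ ^ 2 * t := by
          rw [norm_smul, Real.norm_of_nonneg ht.1]
          ring
  have := image_norm_le_of_norm_deriv_right_le_deriv_boundary
    (fun t _ => (hφ t).continuousAt.continuousWithinAt) (fun t _ => (hφ t).hasDerivWithinAt)
    (by simp [φ]) hB hbound (right_mem_Icc.2 zero_le_one)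
  simpa [φ] using this

theorem abs_sub_sub_two_inner_gradient_le {F : Type*} [NormedAddCommGroup F]
    [InnerProductSpace ℝ F] [CompleteSpace F] {f : F → ℝ} {L : ℝ} (hf : Differentiable ℝ f)
    (hlip : ∀ x y, ‖gradient f x - gradient f y‖ ≤ L * ‖x - y‖) (x h : F) :
    |f (x + h) - f (x - h) - 2 * ⟪gradient f x, h⟫| ≤ L * ‖h‖ ^ 2 := by
  have hlip' : ∀ y, ‖InnerProductSpace.toDual ℝ F (gradient f y) -
      InnerProductSpace.toDual ℝ F (gradient f x)‖ ≤ L * ‖y - x‖ := by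
    intro y
    rw [← map_sub, LinearIsometryEquiv.norm_map]
    exact hlip y x
  have taylor := norm_image_add_sub_sub_fderiv_le (fun y => (hf y).hasGradientAt) hlip'
  have h₁ := taylor h
  have h₂ := taylor (-h)
  simp only [InnerProductSpace.toDual_apply_apply, Real.norm_eq_abs, norm_neg, inner_neg_right,
    ← sub_eq_add_neg] at h₁ h₂
  calc |f (x + h) - f (x - h) - 2 * ⟪gradient f x, h⟫|
      = |(f (x + h) - f x - ⟪gradient f x, h⟫) - (f (x - h) - f x - -⟪gradient f x, h⟫)| := by
        ring_nf
    _ ≤ L / 2 * ‖h‖ ^ 2 + L / 2 * ‖h‖ ^ 2 := (abs_sub _ _).trans (add_le_add h₁ h₂)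
    _ = L * ‖h‖ ^ 2 := by ring

theorem ae_mem_Icc_of_map_eq_smul_restrict {Ω : Type*} {m : MeasurableSpace Ω} {P : Measure Ω}
    {r : Ω → ℝ} {c : ℝ≥0∞} {a b : ℝ} (hc : c ≠ 0) (hab : a < b)
    (hr : P.map r = c • volume.restrict (Icc a b)) : ∀ᵐ ω ∂P, r ω ∈ Icc a b := by
  have hr_meas : AEMeasurable r P := .of_map_ne_zero (by simp [hr, hc, hab])
  exact ae_of_ae_map hr_meas (hr ▸ Measure.ae_smul_measure (ae_restrict_mem measurableSet_Icc) c)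

section RotationInvariant

variable {Ω E : Type*} {m : MeasurableSpace Ω} {P : Measure Ω} [NormedAddCommGroup E]
  [InnerProductSpace ℝ E] [MeasurableSpace E] [BorelSpace E] {e : Ω → E}

theorem integrable_inner_sq [IsFiniteMeasure P] (he : AEMeasurable e P)
    (he_norm : ∀ ω, ‖e ω‖ = 1) (v : E) : Integrable (fun ω => ⟪v, e ω⟫ ^ 2) P := by
  refine Integrable.of_bound
    ((by fun_prop : Measurable fun y : E => ⟪v, y⟫ ^ 2).comp_aemeasurable he).aestronglyMeasurable
    (‖v‖ ^ 2) (ae_of_all _ fun ω => ?_)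
  have := abs_real_inner_le_norm v (e ω)
  rw [he_norm, mul_one] at this
  rw [Real.norm_eq_abs, abs_pow]
  exact pow_le_pow_left₀ (abs_nonneg _) this 2

theorem integral_inner_sq_eq_of_norm_eq (he : AEMeasurable e P)
    (hinv : ∀ O : E ≃ₗᵢ[ℝ] E, P.map (fun ω => O (e ω)) = P.map e) {u v : E} (huv : ‖u‖ = ‖v‖) :
    ∫ ω, ⟪u, e ω⟫ ^ 2 ∂P = ∫ ω, ⟪v, e ω⟫ ^ 2 ∂P := by
  set O := (ℝ ∙ (v - u))ᗮ.reflection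
  have hO : ∀ y, ⟪u, y⟫ = ⟪v, O y⟫ := fun y => by
    simpa [O, Submodule.reflection_sub huv.symm] using O.inner_map_map v (O y)
  have hg : AEStronglyMeasurable (fun y => ⟪v, y⟫ ^ 2) (P.map e) := by fun_prop
  have hOe : AEMeasurable (fun ω => O (e ω)) P := O.continuous.measurable.comp_aemeasurable he
  calc ∫ ω, ⟪u, e ω⟫ ^ 2 ∂P = ∫ y, ⟪v, y⟫ ^ 2 ∂P.map (fun ω => O (e ω)) := by
        simp_rw [hO]; exact (integral_map hOe (hinv O ▸ hg)).symm
    _ = ∫ ω, ⟪v, e ω⟫ ^ 2 ∂P := by rw [hinv O, integral_map he hg]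

theorem finrank_mul_integral_inner_sq [FiniteDimensional ℝ E] [IsProbabilityMeasure P]
    (he : AEMeasurable e P) (he_norm : ∀ ω, ‖e ω‖ = 1)
    (hinv : ∀ O : E ≃ₗᵢ[ℝ] E, P.map (fun ω => O (e ω)) = P.map e) (v : E) :
    Module.finrank ℝ E * ∫ ω, ⟪v, e ω⟫ ^ 2 ∂P = ‖v‖ ^ 2 := by
  set b := stdOrthonormalBasis ℝ E
  have hb : ∀ i, ∫ ω, ⟪v, e ω⟫ ^ 2 ∂P = ‖v‖ ^ 2 * ∫ ω, ⟪b i, e ω⟫ ^ 2 ∂P := fun i => by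
    rw [integral_inner_sq_eq_of_norm_eq he hinv (v := ‖v‖ • b i) (by simp [norm_smul]),
      ← integral_const_mul]
    simp_rw [real_inner_smul_left, mul_pow]
  calc Module.finrank ℝ E * ∫ ω, ⟪v, e ω⟫ ^ 2 ∂P
      = ∑ i, ‖v‖ ^ 2 * ∫ ω, ⟪b i, e ω⟫ ^ 2 ∂P := by simp [← hb]
    _ = ‖v‖ ^ 2 * ∫ ω, ∑ i, ⟪b i, e ω⟫ ^ 2 ∂P := by
      rw [← Finset.mul_sum, integral_finsetSum _ fun i _ => integrable_inner_sq he he_norm _]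
    _ = ‖v‖ ^ 2 := by simp [b.sum_sq_inner_right, he_norm]

end RotationInvariant

-- Cauchy–Schwarz with weights `1/6, 1/3, 1/2`.
theorem add_add_sq_le (a b c : ℝ) : (a + b + c) ^ 2 ≤ 6 * a ^ 2 + 3 * b ^ 2 + 2 * c ^ 2 := by
  nlinarith [sq_nonneg (2 * a - b), sq_nonneg (3 * a - c), sq_nonneg (3 * b - 2 * c)]

theorem sq_norm_kernel_gradient_estimate_le {F : Type*} [NormedAddCommGroup F]
    [InnerProductSpace ℝ F] [CompleteSpace F] {f δ : F → ℝ} {L Δ γ : ℝ} (hf : Differentiable ℝ f)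
    (hlip : ∀ x y, ‖gradient f x - gradient f y‖ ≤ L * ‖x - y‖) (hδ : ∀ x, |δ x| ≤ Δ)
    (hγ : γ ≠ 0) (c k : ℝ) {ρ : ℝ} (hρ : |ρ| ≤ 1) (x : F) {u : F} (hu : ‖u‖ = 1) :
    ‖(c / (2 * γ) * ((f (x + (γ * ρ) • u) + δ (x + (γ * ρ) • u))
        - (f (x - (γ * ρ) • u) + δ (x - (γ * ρ) • u))) * k) • u‖ ^ 2
      ≤ k ^ 2 * (6 * c ^ 2 * ⟪gradient f x, u⟫ ^ 2
        + (3 / 4 * c ^ 2 * L ^ 2 * γ ^ 2 + 2 * c ^ 2 * Δ ^ 2 / γ ^ 2)) := by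
  set h := (γ * ρ) • u
  set A := 2 * ⟪gradient f x, h⟫
  set S := f (x + h) - f (x - h) - A
  set C := δ (x + h) - δ (x - h)
  have hρ2 : ρ ^ 2 ≤ 1 := by rw [← sq_abs]; exact pow_le_one₀ (abs_nonneg ρ) hρ
  have hA : A ^ 2 ≤ 4 * γ ^ 2 * ⟪gradient f x, u⟫ ^ 2 := by
    have : A ^ 2 = 4 * γ ^ 2 * ⟪gradient f x, u⟫ ^ 2 * ρ ^ 2 := by
      simp only [A, h, real_inner_smul_right]; ring
    rw [this]
    exact mul_le_of_le_one_right (by positivity) hρ2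
  have hS : S ^ 2 ≤ L ^ 2 * γ ^ 4 := by
    have hT := abs_sub_sub_two_inner_gradient_le hf hlip x h
    rw [norm_smul, hu, mul_one, Real.norm_eq_abs, sq_abs] at hT
    calc S ^ 2 ≤ (L * (γ * ρ) ^ 2) ^ 2 := sq_le_sq' (abs_le.1 hT).1 (abs_le.1 hT).2
      _ = L ^ 2 * γ ^ 4 * (ρ ^ 2) ^ 2 := by ring
      _ ≤ L ^ 2 * γ ^ 4 := mul_le_of_le_one_right (by positivity) (pow_le_one₀ (sq_nonneg ρ) hρ2)
  have hC : C ^ 2 ≤ 4 * Δ ^ 2 := by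
    have : |C| ≤ 2 * Δ := (abs_sub _ _).trans (by linarith [hδ (x + h), hδ (x - h)])
    nlinarith [sq_abs C, abs_nonneg C]
  have hsplit : (f (x + h) + δ (x + h)) - (f (x - h) + δ (x - h)) = A + S + C := by ring
  rw [hsplit, norm_smul, hu, mul_one, Real.norm_eq_abs, sq_abs]
  calc (c / (2 * γ) * (A + S + C) * k) ^ 2 = c ^ 2 * k ^ 2 / (4 * γ ^ 2) * (A + S + C) ^ 2 := by
        field_simp; ring
    _ ≤ c ^ 2 * k ^ 2 / (4 * γ ^ 2) *
        (6 * (4 * γ ^ 2 * ⟪gradient f x, u⟫ ^ 2) + 3 * (L ^ 2 * γ ^ 4) + 2 * (4 * Δ ^ 2)) := by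
        gcongr
        linarith [add_add_sq_le A S C]
    _ = _ := by field_simp; ring

theorem kernel_second_moment_deterministic_noise_general
    {Ω : Type*} {m0 : MeasurableSpace Ω} (P : Measure Ω) [IsProbabilityMeasure P]
    {d : ℕ} (f : EuclideanSpace ℝ (Fin d) → ℝ) (L₂ : ℝ)
    (hf : Differentiable ℝ f)
    (hlip : ∀ x y : EuclideanSpace ℝ (Fin d), ‖gradient f x - gradient f y‖ ≤ L₂ * ‖x - y‖)
    (δ : EuclideanSpace ℝ (Fin d) → ℝ) (Δ : ℝ)
    (hδ : ∀ x, |δ x| ≤ Δ)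
    (γ : ℝ) (hγ : 0 < γ)
    (e : Ω → EuclideanSpace ℝ (Fin d)) (r : Ω → ℝ) (K : ℝ → ℝ)
    (he_meas : Measurable e) (he_norm : ∀ ω, ‖e ω‖ = 1)
    (he_unif : ∀ O : EuclideanSpace ℝ (Fin d) ≃ₗᵢ[ℝ] EuclideanSpace ℝ (Fin d),
      Measure.map (fun ω => O (e ω)) P = Measure.map e P)
    (hr_unif : Measure.map r P = (2⁻¹ : ℝ≥0∞) • volume.restrict (Set.Icc (-1 : ℝ) 1))
    (hindep : IndepFun e r P)
    (hK_meas : Measurable K)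
    (hK2_int : Integrable (fun ω => (K (r ω)) ^ 2) P)
    (x : EuclideanSpace ℝ (Fin d)) :
    ∫ ω, ‖((d : ℝ) / (2 * γ) *
          ((f (x + (γ * r ω) • e ω) + δ (x + (γ * r ω) • e ω))
            - (f (x - (γ * r ω) • e ω) + δ (x - (γ * r ω) • e ω))) * K (r ω)) • e ω‖ ^ 2 ∂P
      ≤ (∫ ω, (K (r ω)) ^ 2 ∂P) *
          (6 * d * ‖gradient f x‖ ^ 2 + 3 / 4 * (d : ℝ) ^ 2 * L₂ ^ 2 * γ ^ 2)
        + 2 * (∫ ω, (K (r ω)) ^ 2 ∂P) * (d : ℝ) ^ 2 * Δ ^ 2 / γ ^ 2 := by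
  set G := gradient f x
  set c₀ := 3 / 4 * (d : ℝ) ^ 2 * L₂ ^ 2 * γ ^ 2 + 2 * (d : ℝ) ^ 2 * Δ ^ 2 / γ ^ 2
  have hr : ∀ᵐ ω ∂P, |r ω| ≤ 1 :=
    (ae_mem_Icc_of_map_eq_smul_restrict (by simp) (by norm_num) hr_unif).mono
      fun ω hω => abs_le.2 hω
  have hbound := hr.mono fun ω hω =>
    sq_norm_kernel_gradient_estimate_le hf hlip hδ hγ.ne' d (K (r ω)) hω x (he_norm ω)
  have hindep' : IndepFun (fun ω => K (r ω) ^ 2) (fun ω => 6 * d ^ 2 * ⟪G, e ω⟫ ^ 2 + c₀) P :=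
    hindep.symm.comp (ψ := fun y => 6 * d ^ 2 * ⟪G, y⟫ ^ 2 + c₀) (hK_meas.pow_const 2)
      (by fun_prop)
  have hinner :=
    (integrable_inner_sq (P := P) he_meas.aemeasurable he_norm G).const_mul (6 * d ^ 2)
  have hmoment : Integrable (fun ω => 6 * d ^ 2 * ⟪G, e ω⟫ ^ 2 + c₀) P :=
    hinner.add (integrable_const c₀)
  have hsphere := finrank_mul_integral_inner_sq he_meas.aemeasurable he_norm he_unif G
  rw [finrank_euclideanSpace_fin] at hsphere
  calc _ ≤ ∫ ω, K (r ω) ^ 2 * (6 * d ^ 2 * ⟪G, e ω⟫ ^ 2 + c₀) ∂P :=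
        integral_mono_of_nonneg (ae_of_all _ fun ω => by positivity)
          (hindep'.integrable_mul hK2_int hmoment) hbound
    _ = (∫ ω, K (r ω) ^ 2 ∂P) * ∫ ω, 6 * d ^ 2 * ⟪G, e ω⟫ ^ 2 + c₀ ∂P :=
        hindep'.integral_mul_eq_mul_integral hK2_int.1 hmoment.1
    _ = (∫ ω, K (r ω) ^ 2 ∂P) * (6 * d * (d * ∫ ω, ⟪G, e ω⟫ ^ 2 ∂P) + c₀) := by
        rw [integral_add hinner (integrable_const c₀), integral_const_mul, integral_const,
          probReal_univ, one_smul]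
        ring
    _ = _ := by rw [hsphere]; ring

/-- Second-moment bound for the kernel-based gradient approximation of an
`L₂`-smooth function evaluated through a zeroth-order oracle corrupted by bounded adversarial
deterministic noise `δ` with `|δ| ≤ Δ`:
`E[‖g̃(x,e,r)‖²] ≤ κ(6d‖∇f(x)‖² + (3/4)d²L₂²γ²) + 2κd²Δ²/γ²`, where `κ = E[K(r)²]`. -/
theorem kernel_second_moment_deterministic_noise
    {Ω : Type*} {m0 : MeasurableSpace Ω} (P : Measure Ω) [IsProbabilityMeasure P]
    {d : ℕ} (f : EuclideanSpace ℝ (Fin d) → ℝ) (L₂ : ℝ)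
    (hf : Differentiable ℝ f)
    (hlip : ∀ x y : EuclideanSpace ℝ (Fin d), ‖gradient f x - gradient f y‖ ≤ L₂ * ‖x - y‖)
    (δ : EuclideanSpace ℝ (Fin d) → ℝ) (Δ : ℝ) (hδ_meas : Measurable δ)
    (hδ : ∀ x, |δ x| ≤ Δ)
    (γ : ℝ) (hγ : 0 < γ)
    (e : Ω → EuclideanSpace ℝ (Fin d)) (r : Ω → ℝ) (K : ℝ → ℝ)
    (he_meas : Measurable e) (he_norm : ∀ ω, ‖e ω‖ = 1)
    (he_unif : ∀ O : EuclideanSpace ℝ (Fin d) ≃ₗᵢ[ℝ] EuclideanSpace ℝ (Fin d),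
      Measure.map (fun ω => O (e ω)) P = Measure.map e P)
    (hr_meas : Measurable r)
    (hr_unif : Measure.map r P = (2⁻¹ : ℝ≥0∞) • volume.restrict (Set.Icc (-1 : ℝ) 1))
    (hindep : IndepFun e r P)
    (hK_meas : Measurable K)
    (hK2_int : Integrable (fun ω => (K (r ω)) ^ 2) P)
    (x : EuclideanSpace ℝ (Fin d)) :
    ∫ ω, ‖((d : ℝ) / (2 * γ) *
          ((f (x + (γ * r ω) • e ω) + δ (x + (γ * r ω) • e ω))
            - (f (x - (γ * r ω) • e ω) + δ (x - (γ * r ω) • e ω))) * K (r ω)) • e ω‖ ^ 2 ∂P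
      ≤ (∫ ω, (K (r ω)) ^ 2 ∂P) *
          (6 * d * ‖gradient f x‖ ^ 2 + 3 / 4 * (d : ℝ) ^ 2 * L₂ ^ 2 * γ ^ 2)
        + 2 * (∫ ω, (K (r ω)) ^ 2 ∂P) * (d : ℝ) ^ 2 * Δ ^ 2 / γ ^ 2 :=
  kernel_second_moment_deterministic_noise_general (m0 := m0) P f L₂ hf hlip δ Δ hδ γ hγ e r K
    he_meas he_norm he_unif hr_unif hindep hK_meas hK2_int x
end

section
/- Let β ≥ 2 with l the largest integer strictly less than β, and let f : ℝ^d → ℝ belong to the Hölder class F_β(L_β). Let δ : ℝ^d → ℝ satisfy |δ(x)| ≤ Δ for all x, let ξ₁, ξ₂ be integrable real random variables independent of the pair (e, r), and define g̃(x, ξ, e, r) := d (f(x + γ r e) + δ(x + γ r e) + ξ₁ − f(x − γ r e) − δ(x − γ r e) − ξ₂) K(r) e/(2γ). Then for every x ∈ ℝ^d, ‖E[g̃(x, ξ, e, r)] − ∇f(x)‖₂ ≤ κ_β d L_β γ^{β−1} + κ₁ d Δ/γ. -/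
/-!
Write `h = γ r e`. Replacing `f (x ± h)` by the order-`l` Taylor polynomial of `f` at `x` costs at
most `L_β ‖h‖^β = L_β γ^β |r|^β` on each side, and `δ` costs at most `2Δ`; integrated against
`d |K(r)| / (2γ)` these errors give the two terms of the bound. What is left has expectation
exactly `∇f x`. The stochastic noise contributes nothing, since `ξ` is independent of `(e, r)` and
`E[K(r) e] = E[K(r)] E[e] = 0`. In the symmetric difference of the Taylor polynomials the terms of
even order cancel, the moment conditions on `K` remove the odd orders `j ≥ 3`, and the first-order
term is `d/(2γ) · 2γ · E[r K(r)] · E[⟪∇f x, e⟫ e] = ∇f x`, because a rotation invariant unit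
vector in dimension `d` has second moment matrix `E[e eᵀ] = I/d`.
-/

open MeasureTheory ProbabilityTheory
open scoped ENNReal RealInnerProductSpace

section Sphere

variable {ι Ω : Type*} [Fintype ι] {m0 : MeasurableSpace Ω} {P : Measure Ω}
  {e : Ω → EuclideanSpace ℝ ι}

lemma integral_comp_linearIsometryEquiv_eq (he : Measurable e)
    (O : EuclideanSpace ℝ ι ≃ₗᵢ[ℝ] EuclideanSpace ℝ ι)
    (hO : P.map (fun ω => O (e ω)) = P.map e) {g : EuclideanSpace ℝ ι → ℝ} (hg : Measurable g) :
    ∫ ω, g (O (e ω)) ∂P = ∫ ω, g (e ω) ∂P :=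
  (IdentDistrib.comp ⟨(O.continuous.measurable.comp he).aemeasurable, he.aemeasurable, hO⟩ hg
    ).integral_eq

lemma abs_apply_le_of_norm_eq_one {y : EuclideanSpace ℝ ι} (hy : ‖y‖ = 1) (i : ι) : |y i| ≤ 1 :=
  hy ▸ (Real.norm_eq_abs (y i)).symm.trans_le (PiLp.norm_apply_le y i)

lemma integrable_coord_mul_coord [IsFiniteMeasure P] (he : Measurable e)
    (he_norm : ∀ ω, ‖e ω‖ = 1) (i k : ι) : Integrable (fun ω => e ω i * e ω k) P :=
  .of_bound (by fun_prop) 1 <| ae_of_all _ fun ω => by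
    rw [Real.norm_eq_abs, abs_mul]
    exact mul_le_one₀ (abs_apply_le_of_norm_eq_one (he_norm ω) i) (abs_nonneg _)
      (abs_apply_le_of_norm_eq_one (he_norm ω) k)

variable [DecidableEq ι] [IsProbabilityMeasure P]

/-- Coordinate reflections make the off-diagonal moments vanish; coordinate transpositions make
the diagonal ones equal, and they sum to `E ‖e‖² = 1`. -/
lemma card_mul_integral_coord_mul_coord (he : Measurable e) (he_norm : ∀ ω, ‖e ω‖ = 1)
    (he_unif : ∀ O : EuclideanSpace ℝ ι ≃ₗᵢ[ℝ] EuclideanSpace ℝ ι,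
      P.map (fun ω => O (e ω)) = P.map e) (i k : ι) :
    (Fintype.card ι : ℝ) * ∫ ω, e ω i * e ω k ∂P = if i = k then 1 else 0 := by
  split_ifs with hik
  · subst hik
    have hswap (k : ι) : ∫ ω, e ω k * e ω k ∂P = ∫ ω, e ω i * e ω i ∂P := by
      simpa using integral_comp_linearIsometryEquiv_eq he
        (LinearIsometryEquiv.piLpCongrLeft 2 ℝ ℝ (Equiv.swap i k)) (he_unif _)
        (g := fun y => y i * y i) (by fun_prop)
    have hsum : ∑ k, ∫ ω, e ω k * e ω k ∂P = 1 := by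
      have hnorm (ω : Ω) : ∑ k, e ω k * e ω k = 1 := by
        simpa [he_norm, ← sq] using (EuclideanSpace.norm_sq_eq (e ω)).symm
      rw [← integral_finsetSum _ fun k _ => integrable_coord_mul_coord he he_norm k k]
      simp [hnorm]
    simpa [hswap] using hsum
  · have hneg := integral_comp_linearIsometryEquiv_eq he
      (LinearIsometryEquiv.piLpCongrRight 2
        fun j => if j = i then LinearIsometryEquiv.neg ℝ else LinearIsometryEquiv.refl ℝ ℝ)
      (he_unif _) (g := fun y => y i * y k) (by fun_prop)
    simp only [LinearIsometryEquiv.piLpCongrRight_apply, ↓reduceIte, LinearIsometryEquiv.coe_neg,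
      Ne.symm hik, LinearIsometryEquiv.coe_refl, id_eq, neg_mul, integral_neg] at hneg
    exact mul_eq_zero_of_right _ (by linarith)

lemma card_smul_integral_inner_smul (he : Measurable e) (he_norm : ∀ ω, ‖e ω‖ = 1)
    (he_unif : ∀ O : EuclideanSpace ℝ ι ≃ₗᵢ[ℝ] EuclideanSpace ℝ ι,
      P.map (fun ω => O (e ω)) = P.map e) (v : EuclideanSpace ℝ ι) :
    (Fintype.card ι : ℝ) • ∫ ω, ⟪v, e ω⟫ • e ω ∂P = v := by
  have hint : Integrable (fun ω => ⟪v, e ω⟫ • e ω) P :=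
    .of_bound (by fun_prop) ‖v‖ <| ae_of_all _ fun ω => by
      simpa [norm_smul, he_norm ω] using abs_real_inner_le_norm v (e ω)
  ext k
  have hcoord (ω : Ω) : (⟪v, e ω⟫ • e ω) k = ∑ i, v i * (e ω i * e ω k) := by
    simp [PiLp.inner_apply, Finset.mul_sum, mul_comm, mul_left_comm]
  have hproj : (∫ ω, ⟪v, e ω⟫ • e ω ∂P) k = ∫ ω, (⟪v, e ω⟫ • e ω) k ∂P :=
    ((EuclideanSpace.proj k).integral_comp_comm hint).symm
  rw [PiLp.smul_apply, hproj]
  simp only [hcoord]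
  rw [integral_finsetSum _ fun i _ => (integrable_coord_mul_coord he he_norm i k).const_mul _]
  simp [integral_const_mul, Finset.mul_sum, mul_left_comm _ (v _),
    card_mul_integral_coord_mul_coord he he_norm he_unif]

end Sphere

section Taylor

variable {E : Type*} [NormedAddCommGroup E] [NormedSpace ℝ E]

noncomputable def taylorPoly (f : E → ℝ) (x : E) (n : ℕ) (v : E) : ℝ :=
  ∑ j ∈ Finset.range (n + 1), (j.factorial : ℝ)⁻¹ * iteratedFDeriv ℝ j f x (fun _ => v)

lemma iteratedFDeriv_apply_const_smul (f : E → ℝ) (x : E) (j : ℕ) (t : ℝ) (v : E) :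
    iteratedFDeriv ℝ j f x (fun _ => t • v) = t ^ j * iteratedFDeriv ℝ j f x (fun _ => v) := by
  simpa using (iteratedFDeriv ℝ j f x).map_smul_univ (fun _ => t) (fun _ => v)

lemma taylorPoly_smul_sub_taylorPoly_neg_smul (f : E → ℝ) (x : E) (n : ℕ) (t : ℝ) (v : E) :
    taylorPoly f x n (t • v) - taylorPoly f x n (-(t • v)) =
      ∑ j ∈ Finset.range (n + 1),
        (t ^ j - (-t) ^ j) / j.factorial * iteratedFDeriv ℝ j f x (fun _ => v) := by
  rw [taylorPoly, taylorPoly, ← Finset.sum_sub_distrib, ← neg_smul]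
  refine Finset.sum_congr rfl fun j _ => ?_
  rw [iteratedFDeriv_apply_const_smul, iteratedFDeriv_apply_const_smul]
  ring

lemma taylorPoly_sub_neg_mul_smul_eq_sum (f : E → ℝ) (x : E) (n : ℕ) (c γ ρ k : ℝ) (v : E) :
    (c * (taylorPoly f x n ((γ * ρ) • v) - taylorPoly f x n (-((γ * ρ) • v))) * k) • v =
      ∑ j ∈ Finset.range (n + 1), (c * (γ ^ j - (-γ) ^ j) / j.factorial) •
        ((ρ ^ j * k) • (iteratedFDeriv ℝ j f x (fun _ => v) • v)) := by
  rw [taylorPoly_smul_sub_taylorPoly_neg_smul, Finset.mul_sum, Finset.sum_mul, Finset.sum_smul]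
  refine Finset.sum_congr rfl fun j _ => ?_
  rw [smul_smul, smul_smul, ← neg_mul, mul_pow, mul_pow]
  ring_nf

variable {f : E → ℝ} {x : E} {n : ℕ} {L β : ℝ}

lemma abs_sub_taylorPoly_le (hf : ∀ z, |f z - taylorPoly f x n (z - x)| ≤ L * ‖z - x‖ ^ β)
    (v : E) : |f (x + v) - taylorPoly f x n v| ≤ L * ‖v‖ ^ β := by
  simpa using hf (x + v)

lemma abs_sub_taylorPoly_neg_le (hf : ∀ z, |f z - taylorPoly f x n (z - x)| ≤ L * ‖z - x‖ ^ β)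
    (v : E) : |f (x - v) - taylorPoly f x n (-v)| ≤ L * ‖v‖ ^ β := by
  simpa using hf (x - v)

end Taylor

lemma iteratedFDeriv_one_apply_const {F : Type*} [NormedAddCommGroup F] [InnerProductSpace ℝ F]
    [CompleteSpace F] (f : F → ℝ) (x v : F) :
    iteratedFDeriv ℝ 1 f x (fun _ => v) = ⟪gradient f x, v⟫ := by
  rw [iteratedFDeriv_one_apply, inner_gradient_left]

section KernelSmoothing

variable {ι Ω : Type*} [Fintype ι] {m0 : MeasurableSpace Ω} {P : Measure Ω}
  {e : Ω → EuclideanSpace ℝ ι} {r : Ω → ℝ} {K : ℝ → ℝ}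

lemma ae_abs_le_one_of_map_eq (hr : Measurable r)
    (hr_unif : P.map r = (2⁻¹ : ℝ≥0∞) • volume.restrict (Set.Icc (-1 : ℝ) 1)) :
    ∀ᵐ ω ∂P, |r ω| ≤ 1 := by
  have hmem : ∀ᵐ t ∂P.map r, t ∈ Set.Icc (-1 : ℝ) 1 := by
    rw [hr_unif]
    exact Measure.ae_smul_measure (ae_restrict_mem measurableSet_Icc) _
  filter_upwards [(ae_map_iff hr.aemeasurable measurableSet_Icc).mp hmem] with ω hω
  exact abs_le.mpr hω

lemma integrable_pow_mul_of_ae_abs_le_one (hr : Measurable r) (hr1 : ∀ᵐ ω ∂P, |r ω| ≤ 1)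
    (hKi : Integrable (fun ω => K (r ω)) P) (j : ℕ) :
    Integrable (fun ω => r ω ^ j * K (r ω)) P :=
  hKi.mono ((hr.pow_const j).aestronglyMeasurable.mul hKi.1) <| hr1.mono fun ω hω => by
    rw [norm_mul, norm_pow]
    exact mul_le_of_le_one_left (norm_nonneg _) (pow_le_one₀ (norm_nonneg _) hω)

lemma sub_neg_pow_mul_integral_pow_mul_eq_zero {l : ℕ}
    (hKj : ∀ j : ℕ, 2 ≤ j → j ≤ l → ∫ ω, r ω ^ j * K (r ω) ∂P = 0) (γ : ℝ) {j : ℕ} (hjl : j ≤ l)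
    (hj1 : j ≠ 1) : (γ ^ j - (-γ) ^ j) * ∫ ω, r ω ^ j * K (r ω) ∂P = 0 := by
  rcases Nat.even_or_odd j with heven | hodd
  · rw [heven.neg_pow, sub_self, zero_mul]
  · rw [hKj j (by rcases hodd with ⟨k, rfl⟩; omega) hjl, mul_zero]

lemma integral_mul_kernel_smul_eq_zero {Z : Ω → ℝ} (hZ : IndepFun Z (fun ω => (e ω, r ω)) P)
    (hZm : AEMeasurable Z P) (he : Measurable e) (hr : Measurable r) (hindep : IndepFun e r P)
    (hK : Measurable K) (hK0 : ∫ ω, K (r ω) ∂P = 0) :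
    ∫ ω, (Z ω * K (r ω)) • e ω ∂P = 0 := by
  have hKe : ∫ ω, K (r ω) • e ω ∂P = 0 := by
    refine (hindep.symm.integral_fun_comp_smul_comp (f := K) (g := id) hr.aemeasurable
      he.aemeasurable (by fun_prop) (by fun_prop)).trans ?_
    rw [hK0, zero_smul]
  simp_rw [mul_smul]
  refine (hZ.integral_fun_comp_smul_comp (f := id) (g := fun p => K p.2 • p.1) hZm
    (he.prodMk hr).aemeasurable (by fun_prop) (by fun_prop)).trans ?_
  exact smul_eq_zero_of_right _ hKe

lemma integrable_mul_kernel_smul {Z : Ω → ℝ} (hZ : IndepFun Z (fun ω => (e ω, r ω)) P)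
    (hZi : Integrable Z P) (he : Measurable e) (he_norm : ∀ ω, ‖e ω‖ = 1)
    (hK : Measurable K) (hKi : Integrable (fun ω => K (r ω)) P) :
    Integrable (fun ω => (Z ω * K (r ω)) • e ω) P := by
  have hKe : Integrable (fun ω => K (r ω) • e ω) P :=
    hKi.mono (hKi.1.smul he.aestronglyMeasurable)
      (ae_of_all _ fun ω => by simp [norm_smul, he_norm ω])
  have hZKe : IndepFun Z (fun ω => K (r ω) • e ω) P :=
    hZ.comp measurable_id ((hK.comp measurable_snd).smul measurable_fst)
  simpa only [mul_smul] using hZKe.integrable_smul hZi hKe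

variable [IsProbabilityMeasure P]

lemma integrable_pow_mul_smul_iteratedFDeriv_smul (he : Measurable e)
    (he_norm : ∀ ω, ‖e ω‖ = 1) (hr : Measurable r) (hindep : IndepFun e r P)
    (hr1 : ∀ᵐ ω ∂P, |r ω| ≤ 1) (hK : Measurable K) (hKi : Integrable (fun ω => K (r ω)) P)
    (f : EuclideanSpace ℝ ι → ℝ) (x : EuclideanSpace ℝ ι) (j : ℕ) :
    Integrable (fun ω => (r ω ^ j * K (r ω)) • (iteratedFDeriv ℝ j f x (fun _ => e ω) • e ω))
      P := by
  have hψ : Continuous fun y : EuclideanSpace ℝ ι => iteratedFDeriv ℝ j f x (fun _ => y) • y :=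
    ((iteratedFDeriv ℝ j f x).cont.comp (continuous_pi fun _ => continuous_id)).smul continuous_id
  refine (hindep.symm.comp ((measurable_id.pow_const j).mul hK) hψ.measurable).integrable_smul
    (integrable_pow_mul_of_ae_abs_le_one hr hr1 hKi j)
    (.of_bound (hψ.measurable.comp he).aestronglyMeasurable ‖iteratedFDeriv ℝ j f x‖ ?_)
  refine ae_of_all _ fun ω => ?_
  simpa [norm_smul, he_norm ω] using (iteratedFDeriv ℝ j f x).le_opNorm (fun _ => e ω)

lemma integrable_taylorPoly_sub_kernel_smul (he : Measurable e) (he_norm : ∀ ω, ‖e ω‖ = 1)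
    (hr : Measurable r) (hindep : IndepFun e r P) (hr1 : ∀ᵐ ω ∂P, |r ω| ≤ 1)
    (hK : Measurable K) (hKi : Integrable (fun ω => K (r ω)) P)
    (f : EuclideanSpace ℝ ι → ℝ) (x : EuclideanSpace ℝ ι) (n : ℕ) (c γ : ℝ) :
    Integrable (fun ω => (c * (taylorPoly f x n ((γ * r ω) • e ω)
      - taylorPoly f x n (-((γ * r ω) • e ω))) * K (r ω)) • e ω) P := by
  simp_rw [taylorPoly_sub_neg_mul_smul_eq_sum]
  exact integrable_finsetSum _ fun j _ =>
    (integrable_pow_mul_smul_iteratedFDeriv_smul he he_norm hr hindep hr1 hK hKi f x j).fun_smul _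

theorem integral_taylorPoly_sub_kernel_smul [DecidableEq ι] (he : Measurable e)
    (he_norm : ∀ ω, ‖e ω‖ = 1)
    (he_unif : ∀ O : EuclideanSpace ℝ ι ≃ₗᵢ[ℝ] EuclideanSpace ℝ ι,
      P.map (fun ω => O (e ω)) = P.map e)
    (hr : Measurable r) (hindep : IndepFun e r P) (hr1 : ∀ᵐ ω ∂P, |r ω| ≤ 1)
    (hK : Measurable K) (hKi : Integrable (fun ω => K (r ω)) P)
    {l : ℕ} (hl : 1 ≤ l) (hK1 : ∫ ω, r ω * K (r ω) ∂P = 1)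
    (hKj : ∀ j : ℕ, 2 ≤ j → j ≤ l → ∫ ω, r ω ^ j * K (r ω) ∂P = 0)
    (f : EuclideanSpace ℝ ι → ℝ) (x : EuclideanSpace ℝ ι) {γ : ℝ} (hγ : γ ≠ 0) :
    ∫ ω, ((Fintype.card ι : ℝ) / (2 * γ) * (taylorPoly f x l ((γ * r ω) • e ω)
      - taylorPoly f x l (-((γ * r ω) • e ω))) * K (r ω)) • e ω ∂P = gradient f x := by
  simp_rw [taylorPoly_sub_neg_mul_smul_eq_sum]
  rw [integral_finsetSum _ fun j _ =>
    (integrable_pow_mul_smul_iteratedFDeriv_smul he he_norm hr hindep hr1 hK hKi f x j).fun_smul _]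
  have hsplit (j : ℕ) :
      ∫ ω, (r ω ^ j * K (r ω)) • (iteratedFDeriv ℝ j f x (fun _ => e ω) • e ω) ∂P
        = (∫ ω, r ω ^ j * K (r ω) ∂P) • ∫ ω, iteratedFDeriv ℝ j f x (fun _ => e ω) • e ω ∂P :=
    hindep.symm.integral_fun_comp_smul_comp (f := fun t => t ^ j * K t)
      (g := fun y => iteratedFDeriv ℝ j f x (fun _ => y) • y) hr.aemeasurable he.aemeasurable
      (by fun_prop) (by fun_prop)
  simp_rw [integral_smul, hsplit, smul_smul]
  rw [Finset.sum_eq_single_of_mem 1 (Finset.mem_range.mpr (by omega)) fun j hj hj1 => ?_]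
  · simp only [pow_one, hK1, iteratedFDeriv_one_apply_const]
    convert card_smul_integral_inner_smul he he_norm he_unif (gradient f x) using 2
    field_simp
    ring
  · have hvanish := sub_neg_pow_mul_integral_pow_mul_eq_zero hKj γ
      (Nat.lt_succ_iff.mp (Finset.mem_range.mp hj)) hj1
    exact smul_eq_zero_of_left
      (by linear_combination (Fintype.card ι / (2 * γ) / j.factorial : ℝ) * hvanish) _

end KernelSmoothing

lemma norm_integral_sub_le_of_norm_sub_le {Ω F : Type*} {m0 : MeasurableSpace Ω} {P : Measure Ω}
    [NormedAddCommGroup F] [NormedSpace ℝ F] {g m : Ω → F} {b : Ω → ℝ} {v : F}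
    (hg : Integrable g P) (hm : Integrable m P) (hmv : ∫ ω, m ω ∂P = v) (hb : Integrable b P)
    (hgm : ∀ᵐ ω ∂P, ‖g ω - m ω‖ ≤ b ω) : ‖(∫ ω, g ω ∂P) - v‖ ≤ ∫ ω, b ω ∂P := by
  rw [← hmv, ← integral_sub hg hm]
  exact norm_integral_le_of_norm_le hb hgm

lemma norm_smul_sub_le_of_abs_le {F : Type*} [NormedAddCommGroup F] [NormedSpace ℝ F] {u : F}
    (hu : ‖u‖ = 1) {c k a₁ a₂ p₁ p₂ δ₁ δ₂ z₁ z₂ B Δ : ℝ} (hc : 0 ≤ c)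
    (ha₁ : |a₁ - p₁| ≤ B) (ha₂ : |a₂ - p₂| ≤ B) (hδ₁ : |δ₁| ≤ Δ) (hδ₂ : |δ₂| ≤ Δ) :
    ‖(c * ((a₁ + δ₁ + z₁) - (a₂ + δ₂ + z₂)) * k) • u
        - ((c * (p₁ - p₂) * k) • u + (c * (z₁ - z₂) * k) • u)‖ ≤ c * (2 * B + 2 * Δ) * |k| := by
  rw [← add_smul, ← sub_smul, norm_smul, hu, mul_one, Real.norm_eq_abs,
    show c * ((a₁ + δ₁ + z₁) - (a₂ + δ₂ + z₂)) * k - (c * (p₁ - p₂) * k + c * (z₁ - z₂) * k)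
      = c * ((a₁ - p₁) - (a₂ - p₂) + (δ₁ - δ₂)) * k by ring,
    abs_mul, abs_mul, abs_of_nonneg hc]
  gcongr
  obtain ⟨h₁, h₂⟩ := abs_le.mp ha₁
  obtain ⟨h₃, h₄⟩ := abs_le.mp ha₂
  obtain ⟨h₅, h₆⟩ := abs_le.mp hδ₁
  obtain ⟨h₇, h₈⟩ := abs_le.mp hδ₂
  exact abs_le.mpr ⟨by linarith, by linarith⟩

theorem kernel_bias_mixed_noise_general
    {Ω : Type*} {m0 : MeasurableSpace Ω} (P : Measure Ω) [IsProbabilityMeasure P]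
    {d : ℕ} (β : ℝ) (l : ℕ) (hβ : 2 ≤ β) (hl' : β ≤ (l : ℝ) + 1)
    (f : EuclideanSpace ℝ (Fin d) → ℝ) (Lβ : ℝ)
    (hHolder : ∀ x z : EuclideanSpace ℝ (Fin d),
      |f z - ∑ j ∈ Finset.range (l + 1),
          ((j.factorial : ℝ)⁻¹) * iteratedFDeriv ℝ j f x (fun _ => z - x)|
        ≤ Lβ * ‖z - x‖ ^ β)
    (δ : EuclideanSpace ℝ (Fin d) → ℝ) (Δ : ℝ) (hδ : ∀ x, |δ x| ≤ Δ)
    (γ : ℝ) (hγ : 0 < γ)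
    (e : Ω → EuclideanSpace ℝ (Fin d)) (r : Ω → ℝ) (ξ₁ ξ₂ : Ω → ℝ) (K : ℝ → ℝ)
    (he_meas : Measurable e) (he_norm : ∀ ω, ‖e ω‖ = 1)
    (he_unif : ∀ O : EuclideanSpace ℝ (Fin d) ≃ₗᵢ[ℝ] EuclideanSpace ℝ (Fin d),
      Measure.map (fun ω => O (e ω)) P = Measure.map e P)
    (hr_meas : Measurable r)
    (hr_unif : Measure.map r P = (2⁻¹ : ℝ≥0∞) • volume.restrict (Set.Icc (-1 : ℝ) 1))
    (hindep : IndepFun e r P)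
    (hξ₁_int : Integrable ξ₁ P) (hξ₂_int : Integrable ξ₂ P)
    (hξ_indep : IndepFun (fun ω => (ξ₁ ω, ξ₂ ω)) (fun ω => (e ω, r ω)) P)
    (hK_meas : Measurable K)
    (hK0 : ∫ ω, K (r ω) ∂P = 0)
    (hK1 : ∫ ω, r ω * K (r ω) ∂P = 1)
    (hKj : ∀ j : ℕ, 2 ≤ j → j ≤ l → ∫ ω, (r ω) ^ j * K (r ω) ∂P = 0)
    (hKβ_int : Integrable (fun ω => |r ω| ^ β * |K (r ω)|) P)
    (hK_int : Integrable (fun ω => |K (r ω)|) P)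
    (x : EuclideanSpace ℝ (Fin d))
    (hg_int : Integrable (fun ω =>
      ((d : ℝ) / (2 * γ) *
          ((f (x + (γ * r ω) • e ω) + δ (x + (γ * r ω) • e ω) + ξ₁ ω)
            - (f (x - (γ * r ω) • e ω) + δ (x - (γ * r ω) • e ω) + ξ₂ ω)) * K (r ω)) • e ω) P) :
    ‖(∫ ω, ((d : ℝ) / (2 * γ) *
          ((f (x + (γ * r ω) • e ω) + δ (x + (γ * r ω) • e ω) + ξ₁ ω)
            - (f (x - (γ * r ω) • e ω) + δ (x - (γ * r ω) • e ω) + ξ₂ ω)) * K (r ω)) • e ω ∂P)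
        - gradient f x‖
      ≤ (∫ ω, |r ω| ^ β * |K (r ω)| ∂P) * d * Lβ * γ ^ (β - 1)
        + (∫ ω, |K (r ω)| ∂P) * d * Δ / γ := by
  have hl1 : 1 ≤ l := by exact_mod_cast (show (1 : ℝ) ≤ l by linarith)
  have hr1 := ae_abs_le_one_of_map_eq hr_meas hr_unif
  have hKi : Integrable (fun ω => K (r ω)) P :=
    (integrable_norm_iff (hK_meas.comp hr_meas).aestronglyMeasurable).mp hK_int
  have hZ : IndepFun (fun ω => (d : ℝ) / (2 * γ) * (ξ₁ ω - ξ₂ ω)) (fun ω => (e ω, r ω)) P :=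
    hξ_indep.comp (measurable_const.mul (measurable_fst.sub measurable_snd)) measurable_id
  have hZi := (hξ₁_int.sub hξ₂_int).const_mul ((d : ℝ) / (2 * γ))
  have hTaylor := integral_taylorPoly_sub_kernel_smul he_meas he_norm he_unif hr_meas hindep hr1
    hK_meas hKi hl1 hK1 hKj f x hγ.ne'
  rw [Fintype.card_fin] at hTaylor
  have hbound (ω : Ω) : (d : ℝ) / (2 * γ) * (2 * (Lβ * ‖(γ * r ω) • e ω‖ ^ β) + 2 * Δ) * |K (r ω)|
      = d * Lβ * γ ^ (β - 1) * (|r ω| ^ β * |K (r ω)|) + d * Δ / γ * |K (r ω)| := by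
    rw [norm_smul, he_norm ω, mul_one, Real.norm_eq_abs, abs_mul, abs_of_pos hγ,
      Real.mul_rpow hγ.le (abs_nonneg _), Real.rpow_sub_one hγ.ne']
    field_simp
  have hTi := integrable_taylorPoly_sub_kernel_smul he_meas he_norm hr_meas hindep hr1 hK_meas
    hKi f x l ((d : ℝ) / (2 * γ)) γ
  have hNi := integrable_mul_kernel_smul hZ hZi he_meas he_norm hK_meas hKi
  refine (norm_integral_sub_le_of_norm_sub_le hg_int (hTi.add hNi)
    (by rw [integral_add' hTi hNi, hTaylor, integral_mul_kernel_smul_eq_zero hZ hZi.aemeasurable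
      he_meas hr_meas hindep hK_meas hK0, add_zero])
    (b := fun ω => (d : ℝ) / (2 * γ) * (2 * (Lβ * ‖(γ * r ω) • e ω‖ ^ β) + 2 * Δ) * |K (r ω)|)
    (by simp_rw [hbound]; exact (hKβ_int.const_mul _).add (hK_int.const_mul _))
    (ae_of_all _ fun ω => norm_smul_sub_le_of_abs_le (he_norm ω) (by positivity)
      (abs_sub_taylorPoly_le (hHolder x) _) (abs_sub_taylorPoly_neg_le (hHolder x) _)
      (hδ _) (hδ _))).trans_eq ?_
  simp_rw [hbound]
  rw [integral_add (hKβ_int.const_mul _) (hK_int.const_mul _), integral_const_mul,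
    integral_const_mul]
  ring

/-- Bias bound for the one-point kernel-based gradient approximation of a
higher-order smooth (Hölder class `F_β(L_β)`) function, where the zeroth-order oracle is
corrupted both by bounded adversarial deterministic noise `δ` with `|δ| ≤ Δ` and by additive
adversarial stochastic noises `ξ₁, ξ₂` independent of `(e, r)`:
`‖E[g̃(x,ξ,e,r)] − ∇f(x)‖ ≤ κ_β d L_β γ^{β−1} + κ₁ d Δ / γ`. -/
theorem kernel_bias_mixed_noise
    {Ω : Type*} {m0 : MeasurableSpace Ω} (P : Measure Ω) [IsProbabilityMeasure P]
    {d : ℕ} (β : ℝ) (l : ℕ) (hβ : 2 ≤ β) (hl : (l : ℝ) < β) (hl' : β ≤ (l : ℝ) + 1)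
    (f : EuclideanSpace ℝ (Fin d) → ℝ) (Lβ : ℝ)
    (hf : ContDiff ℝ (l : ℕ∞) f)
    (hHolder : ∀ x z : EuclideanSpace ℝ (Fin d),
      |f z - ∑ j ∈ Finset.range (l + 1),
          ((j.factorial : ℝ)⁻¹) * iteratedFDeriv ℝ j f x (fun _ => z - x)|
        ≤ Lβ * ‖z - x‖ ^ β)
    (δ : EuclideanSpace ℝ (Fin d) → ℝ) (Δ : ℝ) (hδ_meas : Measurable δ)
    (hδ : ∀ x, |δ x| ≤ Δ)
    (γ : ℝ) (hγ : 0 < γ)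
    (e : Ω → EuclideanSpace ℝ (Fin d)) (r : Ω → ℝ) (ξ₁ ξ₂ : Ω → ℝ) (K : ℝ → ℝ)
    (he_meas : Measurable e) (he_norm : ∀ ω, ‖e ω‖ = 1)
    (he_unif : ∀ O : EuclideanSpace ℝ (Fin d) ≃ₗᵢ[ℝ] EuclideanSpace ℝ (Fin d),
      Measure.map (fun ω => O (e ω)) P = Measure.map e P)
    (hr_meas : Measurable r)
    (hr_unif : Measure.map r P = (2⁻¹ : ℝ≥0∞) • volume.restrict (Set.Icc (-1 : ℝ) 1))
    (hindep : IndepFun e r P)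
    (hξ₁_meas : Measurable ξ₁) (hξ₂_meas : Measurable ξ₂)
    (hξ₁_int : Integrable ξ₁ P) (hξ₂_int : Integrable ξ₂ P)
    (hξ_indep : IndepFun (fun ω => (ξ₁ ω, ξ₂ ω)) (fun ω => (e ω, r ω)) P)
    (hK_meas : Measurable K)
    (hK0 : ∫ ω, K (r ω) ∂P = 0)
    (hK1 : ∫ ω, r ω * K (r ω) ∂P = 1)
    (hKj : ∀ j : ℕ, 2 ≤ j → j ≤ l → ∫ ω, (r ω) ^ j * K (r ω) ∂P = 0)
    (hKβ_int : Integrable (fun ω => |r ω| ^ β * |K (r ω)|) P)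
    (hK_int : Integrable (fun ω => |K (r ω)|) P)
    (x : EuclideanSpace ℝ (Fin d))
    (hg_int : Integrable (fun ω =>
      ((d : ℝ) / (2 * γ) *
          ((f (x + (γ * r ω) • e ω) + δ (x + (γ * r ω) • e ω) + ξ₁ ω)
            - (f (x - (γ * r ω) • e ω) + δ (x - (γ * r ω) • e ω) + ξ₂ ω)) * K (r ω)) • e ω) P) :
    ‖(∫ ω, ((d : ℝ) / (2 * γ) *
          ((f (x + (γ * r ω) • e ω) + δ (x + (γ * r ω) • e ω) + ξ₁ ω)
            - (f (x - (γ * r ω) • e ω) + δ (x - (γ * r ω) • e ω) + ξ₂ ω)) * K (r ω)) • e ω ∂P)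
        - gradient f x‖
      ≤ (∫ ω, |r ω| ^ β * |K (r ω)| ∂P) * d * Lβ * γ ^ (β - 1)
        + (∫ ω, |K (r ω)| ∂P) * d * Δ / γ :=
  kernel_bias_mixed_noise_general (m0 := m0) P β l hβ hl' f Lβ hHolder δ Δ hδ γ hγ e r ξ₁ ξ₂ K
    he_meas he_norm he_unif hr_meas hr_unif hindep hξ₁_int hξ₂_int hξ_indep hK_meas hK0 hK1 hKj
    hKβ_int hK_int x hg_int
end
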